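/- For a regular dominant weight λ, the Gelfand–Tsetlin polytope GT_λ has exactly n! simplicial vertices, and the map sending a simplicial vertex v to the permutation w_v ∈ S_n (defined by: the element deleted when passing from the multiset of entries of row i to that of row i+1 of v is λ_{w_v^{-1}(i+1)}) is a bijection between simplicial vertices and S_n. -/

import Mathlib

open scoped BigOperators Classical

/-- Index type for Gelfand–Tsetlin pattern positions: (row, column), 0-based. -/
abbrev GTIdx (n : ℕ) := Fin n × Fin n

/-- A position (i,j) is a valid pattern position iff i + j < n (row i has columns 0..n-1-i). -/
def GTValid (n : ℕ) (p : GTIdx n) : Prop := (p.1 : ℕ) + (p.2 : ℕ) < n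

/-- Entry of a real point at natural-number coordinates (0 outside the index range). -/
noncomputable def entryR {n : ℕ} (A : GTIdx n → ℝ) (i j : ℕ) : ℝ :=
  if h : i < n ∧ j < n then A (⟨i, h.1⟩, ⟨j, h.2⟩) else 0

/-- Entry of an integer point at natural-number coordinates (0 outside the index range). -/
def entryZ {n : ℕ} (A : GTIdx n → ℤ) (i j : ℕ) : ℤ :=
  if h : i < n ∧ j < n then A (⟨i, h.1⟩, ⟨j, h.2⟩) else 0

/-- The Gelfand–Tsetlin polytope of λ: top row equal to λ, interlacing inequalities,
and (as a normalization embedding it in a finite-dimensional space) zero at invalid positions. -/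
def GTPoly (n : ℕ) (lam : Fin n → ℝ) : Set (GTIdx n → ℝ) :=
  {A | (∀ j : Fin n, entryR A 0 j = lam j)
    ∧ (∀ i j : ℕ, i + 1 + j < n →
        entryR A (i+1) j ≤ entryR A i j ∧ entryR A i (j+1) ≤ entryR A (i+1) j)
    ∧ (∀ p : GTIdx n, ¬ GTValid n p → A p = 0)}

/-- Integer Gelfand–Tsetlin patterns with top row λ. -/
def GTPat (n : ℕ) (lam : Fin n → ℤ) : Set (GTIdx n → ℤ) :=
  {A | (∀ j : Fin n, entryZ A 0 j = lam j)
    ∧ (∀ i j : ℕ, i + 1 + j < n →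
        entryZ A (i+1) j ≤ entryZ A i j ∧ entryZ A i (j+1) ≤ entryZ A (i+1) j)
    ∧ (∀ p : GTIdx n, ¬ GTValid n p → A p = 0)}

/-- The weight of a pattern: μ_i = (sum of row i-1) - (sum of row i), 1-based;
here `i : Fin n` is 0-based, so `wtZ A i = (row i sum) - (row (i+1) sum)`. -/
def wtZ {n : ℕ} (A : GTIdx n → ℤ) (i : Fin n) : ℤ :=
  (∑ j : Fin n, entryZ A i j) - ∑ j : Fin n, entryZ A ((i : ℕ) + 1) j

noncomputable def wtR {n : ℕ} (A : GTIdx n → ℝ) (i : Fin n) : ℝ :=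
  (∑ j : Fin n, entryR A i j) - ∑ j : Fin n, entryR A ((i : ℕ) + 1) j

/-- Multiset of entries of row i. -/
noncomputable def rowM {n : ℕ} (A : GTIdx n → ℝ) (i : ℕ) : Multiset ℝ :=
  (Finset.univ.filter (fun j : Fin n => i + (j : ℕ) < n)).val.map (fun j => entryR A i (j : ℕ))

/-- Valid pattern positions (the nodes of the ambient graph T). -/
abbrev GTNode (n : ℕ) := {p : GTIdx n // GTValid n p}

/-- `upEdge n p q` : q is an upper neighbour of p in the triangular graph T,
i.e. q = (i-1, j) or (i-1, j+1) where p = (i, j). -/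
def upEdge (n : ℕ) (p q : GTIdx n) : Prop :=
  GTValid n p ∧ GTValid n q ∧ (q.1 : ℕ) + 1 = (p.1 : ℕ) ∧
    ((q.2 : ℕ) = (p.2 : ℕ) ∨ (q.2 : ℕ) = (p.2 : ℕ) + 1)

/-- The equality graph Γ_v of a point v of the GT polytope: nodes are valid positions,
edges join a position to an upper neighbour carrying an equal entry. -/
def Gamma (n : ℕ) (A : GTIdx n → ℝ) : SimpleGraph (GTNode n) where
  Adj p q := (upEdge n p.1 q.1 ∨ upEdge n q.1 p.1) ∧ A p.1 = A q.1
  symm := by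
    constructor
    rintro p q ⟨h, e⟩
    exact ⟨h.symm, e.symm⟩
  loopless := by
    constructor
    rintro p ⟨h | h, _⟩ <;> exact absurd h.2.2.1 (by omega)

/-- Tangent cone of a convex set P at a point v. -/
def tangentCone {E : Type*} [AddCommGroup E] [Module ℝ E] (P : Set E) (v : E) : Set E :=
  {y | ∃ x ∈ P, ∃ t : ℝ, 0 ≤ t ∧ y = v + t • (x - v)}

/-- The ray from v in direction ε. -/
def raySet {E : Type*} [AddCommGroup E] [Module ℝ E] (v ε : E) : Set E :=
  {y | ∃ t : ℝ, 0 ≤ t ∧ y = v + t • ε}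

/-- ε is the direction of an edge (one-dimensional extreme face) of the cone C with apex v. -/
def IsEdgeDir {E : Type*} [AddCommGroup E] [Module ℝ E] (C : Set E) (v ε : E) : Prop :=
  ε ≠ 0 ∧ IsExtreme ℝ C (raySet v ε)

/-- Direction-vector pattern for edges at a simplicial vertex: all nonzero coordinates lie
in rows a..b, one per row, and all are equal to c. -/
def simpDir (n : ℕ) (a b : ℕ) (c : ℝ) (ε : GTIdx n → ℝ) : Prop :=
  (∀ p : GTIdx n, ε p ≠ 0 → GTValid n p ∧ a ≤ (p.1 : ℕ) ∧ (p.1 : ℕ) ≤ b)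
  ∧ (∀ r : ℕ, a ≤ r → r ≤ b → ∃! p : GTIdx n, (p.1 : ℕ) = r ∧ ε p ≠ 0)
  ∧ (∀ p : GTIdx n, ε p ≠ 0 → ε p = c)

/-- A simplicial vertex: a vertex (extreme point) of the GT polytope whose equality graph
is acyclic. -/
def IsSimpVertex (n : ℕ) (lam : Fin n → ℝ) (A : GTIdx n → ℝ) : Prop :=
  A ∈ Set.extremePoints ℝ (GTPoly n lam) ∧ (Gamma n A).IsAcyclic

/- ### Rational functions, integer-point transforms, and the specialization F -/

/-- Field of rational functions in variables indexed by ι. -/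
abbrev KK (ι : Type) := FractionRing (MvPolynomial ι ℚ)

/-- The monomial t^u, u ∈ ℤ^ι, inside the rational function field. -/
noncomputable def tmon (ι : Type) [Fintype ι] (u : ι → ℤ) : KK ι :=
  ∏ i, (algebraMap (MvPolynomial ι ℚ) (KK ι) (MvPolynomial.X i)) ^ (u i)

/-- Indicator (as coefficient function of a formal Laurent series) of the integer points of S. -/
noncomputable def indSet {ι : Type} (S : Set (ι → ℝ)) : (ι → ℤ) → ℚ :=
  fun a => if (fun i => (a i : ℝ)) ∈ S then 1 else 0

/-- `Represents r f` : the rational function r is the integer-point transform of the formal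
Laurent series with coefficient function f, i.e. there is a nonzero Laurent polynomial q such
that q·f is a (finitely supported) Laurent polynomial g and r·q = g as rational functions. -/
noncomputable def Represents {ι : Type} [Fintype ι] (r : KK ι) (f : (ι → ℤ) → ℚ) : Prop :=
  ∃ q : (ι → ℤ) →₀ ℚ, q ≠ 0 ∧ ∃ g : (ι → ℤ) →₀ ℚ,
    (∀ a, g a = ∑ b ∈ q.support, q b * f (a - b)) ∧
    r * (∑ b ∈ q.support, (q b : KK ι) * tmon ι b)
      = ∑ a ∈ g.support, (g a : KK ι) * tmon ι a

/-- Field of rational functions in x_1, ..., x_n. -/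
abbrev Kx (n : ℕ) := FractionRing (MvPolynomial (Fin n) ℚ)

/-- The variable x_i. -/
noncomputable def xv (n : ℕ) (i : Fin n) : Kx n :=
  algebraMap (MvPolynomial (Fin n) ℚ) (Kx n) (MvPolynomial.X i)

/-- The substitution underlying F: t_{0,j} ↦ x_1 and t_{i,j} ↦ x_i⁻¹ x_{i+1} for i ≥ 1
(1-based x's; in our 0-based indexing t_{i,·} ↦ x_{i-1}⁻¹ · x_i for i ≥ 1, t_{0,·} ↦ x_0). -/
noncomputable def xsub (n : ℕ) (p : GTIdx n) : Kx n :=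
  if (p.1 : ℕ) = 0 then xv n p.1
  else (xv n (⟨(p.1 : ℕ) - 1, Nat.lt_of_le_of_lt (Nat.sub_le _ _) p.1.isLt⟩ : Fin n))⁻¹ * xv n p.1

/-- The specialization F on Laurent polynomials, as a ring homomorphism. -/
noncomputable def phiF (n : ℕ) : MvPolynomial (GTIdx n) ℚ →+* Kx n :=
  MvPolynomial.eval₂Hom (Rat.castHom (Kx n)) (xsub n)

/-- `FSpec n r y` : the specialization F of the rational function r (in the t-variables)
is defined and equal to y; i.e. r = p/q with F(q) ≠ 0 and y = F(p)/F(q). -/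
noncomputable def FSpec (n : ℕ) (r : KK (GTIdx n)) (y : Kx n) : Prop :=
  ∃ p q : MvPolynomial (GTIdx n) ℚ, phiF n q ≠ 0 ∧
    r * algebraMap (MvPolynomial (GTIdx n) ℚ) (KK (GTIdx n)) q
      = algebraMap (MvPolynomial (GTIdx n) ℚ) (KK (GTIdx n)) p ∧
    y * phiF n q = phiF n p

/-- The monomial e^μ = x^μ for an integral weight μ. -/
noncomputable def emon {n : ℕ} (mu : Fin n → ℤ) : Kx n := ∏ i, xv n i ^ mu i

/-- ρ = (n-1, n-2, ..., 0). -/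
def rhoW (n : ℕ) (i : Fin n) : ℤ := (n : ℤ) - 1 - (i : ℤ)

/-- The Schur (Laurent) polynomial of λ, defined by Weyl's character formula
(bialternant form). -/
noncomputable def schur (n : ℕ) (lam : Fin n → ℤ) : Kx n :=
  (∑ w : Equiv.Perm (Fin n), ((Equiv.Perm.sign w : ℤ) : Kx n)
      * ∏ i, xv n i ^ (lam (w⁻¹ i) + rhoW n (w⁻¹ i)))
  / (∑ w : Equiv.Perm (Fin n), ((Equiv.Perm.sign w : ℤ) : Kx n)
      * ∏ i, xv n i ^ (rhoW n (w⁻¹ i)))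

/-- The summand w(e^λ / Π_{i<j} (1 - x_j/x_i)) of Weyl's character formula. -/
noncomputable def weylTerm (n : ℕ) (lam : Fin n → ℤ) (w : Equiv.Perm (Fin n)) : Kx n :=
  (∏ i, xv n (w i) ^ lam i)
    / ∏ p ∈ Finset.univ.filter (fun p : Fin n × Fin n => p.1 < p.2),
        (1 - xv n (w p.2) / xv n (w p.1))

/-- Integer version of the edge-direction pattern. -/
def simpDirZ (n : ℕ) (a b : ℕ) (c : ℤ) (ε : GTIdx n → ℤ) : Prop :=
  (∀ p : GTIdx n, ε p ≠ 0 → GTValid n p ∧ a ≤ (p.1 : ℕ) ∧ (p.1 : ℕ) ≤ b)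
  ∧ (∀ r : ℕ, a ≤ r → r ≤ b → ∃! p : GTIdx n, (p.1 : ℕ) = r ∧ ε p ≠ 0)
  ∧ (∀ p : GTIdx n, ε p ≠ 0 → ε p = c)

/-- F(t^u): the specialization of the Laurent monomial t^u. -/
noncomputable def Fmon (n : ℕ) (u : GTIdx n → ℤ) : Kx n := ∏ p, xsub n p ^ u p

/-- A rational polytope in ℝ^m: a bounded set cut out by finitely many integral
linear inequalities. -/
def IsRatPolytope (m : ℕ) (P : Set (Fin m → ℝ)) : Prop :=
  Bornology.IsBounded P ∧ ∃ (k : ℕ) (a : Fin k → Fin m → ℤ) (b : Fin k → ℤ),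
    P = {x | ∀ i, ∑ j, (a i j : ℝ) * x j ≤ (b i : ℝ)}

/-- A rational polyhedron in ℝ^m. -/
def IsRatPolyhedron (m : ℕ) (P : Set (Fin m → ℝ)) : Prop :=
  ∃ (k : ℕ) (a : Fin k → Fin m → ℤ) (b : Fin k → ℤ),
    P = {x | ∀ i, ∑ j, (a i j : ℝ) * x j ≤ (b i : ℝ)}

/-- The cone C_Δ attached to a connected component Δ = c of the equality graph Γ_v:
vectors supported on the nodes of Δ, vanishing at the top (row-0) node of Δ, and
satisfying the interlacing inequalities along the edges of Δ. -/
noncomputable def compCone (n : ℕ) (A : GTIdx n → ℝ) (c : (Gamma n A).ConnectedComponent) :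
    Set (GTIdx n → ℝ) :=
  {x | (∀ p : GTIdx n,
          (¬ ∃ hp : GTValid n p, (Gamma n A).connectedComponentMk ⟨p, hp⟩ = c) → x p = 0)
    ∧ (∀ p : GTNode n, (Gamma n A).connectedComponentMk p = c → (p.1.1 : ℕ) = 0 → x p.1 = 0)
    ∧ (∀ p q : GTNode n, (Gamma n A).connectedComponentMk p = c →
        upEdge n p.1 q.1 → A p.1 = A q.1 →
        (((q.1.2 : ℕ) = (p.1.2 : ℕ)) → x p.1 ≤ x q.1) ∧
        (((q.1.2 : ℕ) = (p.1.2 : ℕ) + 1) → x q.1 ≤ x p.1))}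

/-!
If an entry of a point of GT_λ lies strictly between the two entries above it, then the entries
equal to it in the rows below can all be moved up or down a little, so at a vertex every entry
copies one of the two entries above it; conversely, under this property every entry of a point
on a segment through it is pinned, row by row, by the entries above, so the point is a vertex.
For regular λ the equality graph is acyclic exactly when all rows are strictly decreasing: an
equality inside a row closes a 4-cycle with the rows around it, while with strict rows a node
has at most one equal neighbour in each adjacent row, so a highest node of a cycle cannot
exist. Hence at a simplicial vertex each row is the previous one with exactly one value λ_j
deleted, and the order of deletion is the permutation; conversely deleting the λ_j in any order
and listing the remaining values decreasingly gives a simplicial vertex.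
-/

theorem SimpleGraph.isAcyclic_of_level {V : Type*} {G : SimpleGraph V} (g : V → ℕ)
    (hstep : ∀ a b, G.Adj a b → g a = g b + 1 ∨ g b = g a + 1)
    (huniq : ∀ u a b, G.Adj u a → G.Adj u b → g a = g b → a = b) : G.IsAcyclic := by
  intro v c hc
  obtain ⟨u, hu, hmax⟩ := c.support.toFinset.exists_max_image g ⟨v, by simp⟩
  rw [List.mem_toFinset] at hu
  set c' := c.rotate u hu
  have hc' : c'.IsCycle := by simpa [c'] using hc
  have below : ∀ a ∈ c'.support, G.Adj u a → g u = g a + 1 := fun a ha hadj =>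
    (hstep u a hadj).resolve_right fun h => by
      have := hmax a (List.mem_toFinset.2 ((c.mem_support_rotate_iff u hu).1 ha))
      omega
  have hsnd := SimpleGraph.Walk.adj_snd hc'.not_nil
  have hpen := (SimpleGraph.Walk.adj_penultimate hc'.not_nil).symm
  have hsnd_level := below _ (List.mem_of_mem_tail (c'.snd_mem_tail_support hc'.not_nil)) hsnd
  have hpen_level := below _ (List.mem_of_mem_dropLast
    (c'.penultimate_mem_dropLast_support hc'.not_nil)) hpen
  exact hc'.snd_ne_penultimate (huniq u _ _ hsnd hpen (by omega))

theorem SimpleGraph.IsAcyclic.eq_of_adj_of_adj {V : Type*} {G : SimpleGraph V}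
    (h : G.IsAcyclic) {a b c d : V} (hab : G.Adj a b) (hbc : G.Adj b c) (had : G.Adj a d)
    (hdc : G.Adj d c) (hac : a ≠ c) : b = d := by
  have hpath : ∀ {x} (h₁ : G.Adj a x) (h₂ : G.Adj x c),
      (SimpleGraph.Walk.cons h₁ (SimpleGraph.Walk.cons h₂ .nil)).IsPath := by
    intro x h₁ h₂
    simp [SimpleGraph.Walk.isPath_def, h₁.ne, h₂.ne, hac]
  have := (h.subsingleton_path a c).elim ⟨_, hpath hab hbc⟩ ⟨_, hpath had hdc⟩
  simpa using congrArg (fun p : G.Path a c => p.1.snd) this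

theorem List.getD_erase_eq_or {α : Type*} [BEq α] [LawfulBEq α] (l : List α) (a d : α) (k : ℕ) :
    (l.erase a).getD k d = l.getD k d ∨ (l.erase a).getD k d = l.getD (k + 1) d := by
  rw [List.erase_eq_eraseIdx_of_idxOf rfl]
  simp only [List.getD_eq_getElem?_getD, List.getElem?_eraseIdx]
  split_ifs <;> simp

theorem Multiset.eq_coe_drop_ofFn {α : Type*} {n : ℕ} (M : ℕ → Multiset α) (x : Fin n → α)
    (hx : ∀ j : Fin n, M j = x j ::ₘ M (j + 1)) (hM : ∀ i, n ≤ i → M i = 0) (i : ℕ) :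
    M i = ↑((List.ofFn x).drop i) := by
  rcases le_or_gt i n with hi | hi
  · induction hi using Nat.decreasingInduction with
    | self => rw [hM n le_rfl, List.drop_of_length_le (by simp)]; rfl
    | of_succ k hk ih =>
      rw [hx ⟨k, hk⟩, ih, List.drop_eq_getElem_cons (i := k) (by simpa)]
      simp
  · rw [hM i hi.le, List.drop_of_length_le (by simp; omega)]
    rfl

theorem List.exists_perm_of_perm_ofFn {α : Type*} {n : ℕ} {x f : Fin n → α}
    (hf : Function.Injective f) (h : (List.ofFn x).Perm (List.ofFn f)) :
    ∃ σ : Equiv.Perm (Fin n), x = f ∘ σ := by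
  choose σ hσ using fun j => List.mem_ofFn.1 (h.subset (List.mem_ofFn.2 ⟨j, rfl⟩))
  have hx : Function.Injective x := List.nodup_ofFn.1 (h.nodup_iff.2 (List.nodup_ofFn.2 hf))
  have hσ' : Function.Injective σ := fun a b hab => hx (by rw [← hσ a, ← hσ b, hab])
  exact ⟨Equiv.ofBijective σ hσ'.bijective_of_finite, funext fun j => (hσ j).symm⟩

lemma eq_of_convex_combination_le {a b x y u : ℝ} (ha : 0 < a) (hb : 0 < b) (hab : a + b = 1)
    (hx : x ≤ u) (hy : y ≤ u) (h : a * x + b * y = u) : x = u ∧ y = u := by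
  have hu : a * u + b * u = u := by rw [← add_mul, hab, one_mul]
  have h₁ := mul_nonneg ha.le (sub_nonneg.2 hx)
  have h₂ := mul_nonneg hb.le (sub_nonneg.2 hy)
  have hx' := (mul_eq_zero.1 (show a * (u - x) = 0 by linarith)).resolve_left ha.ne'
  have hy' := (mul_eq_zero.1 (show b * (u - y) = 0 by linarith)).resolve_left hb.ne'
  constructor <;> linarith

open Filter Topology in
lemma exists_pos_le_abs_sub {ι : Type*} [Finite ι] (f : ι → ℝ) (v : ℝ) :
    ∃ ε > 0, ∀ i, f i ≠ v → ε ≤ |f i - v| := by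
  have h : ∀ᶠ ε in 𝓝[>] (0 : ℝ), ∀ i, f i ≠ v → ε ≤ |f i - v| :=
    eventually_all.2 fun i => by
      by_cases hi : f i = v
      · simp [hi]
      · exact ((eventually_le_nhds (abs_pos.2 (sub_ne_zero.2 hi))).filter_mono
          nhdsWithin_le_nhds).mono fun _ h _ => h
  obtain ⟨ε, hε, hpos⟩ := (h.and self_mem_nhdsWithin).exists
  exact ⟨ε, hpos, hε⟩

lemma add_mul_ite_le {x y v s ε : ℝ} {a b : Prop} [Decidable a] [Decidable b] (hxy : x ≤ y)
    (hs : |s| ≤ ε) (ha : a → x = v) (hb : b → y = v) (hab : x = y → (a ↔ b))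
    (hx : x ≠ v → ε ≤ |x - v|) (hy : y ≠ v → ε ≤ |y - v|) :
    x + s * (if a then 1 else 0) ≤ y + s * (if b then 1 else 0) := by
  have hs' := abs_le.1 hs
  split_ifs with h₁ h₂ h₂
  · linarith
  · have hyv : y ≠ v := fun hyv => h₂ ((hab ((ha h₁).trans hyv.symm)).1 h₁)
    have := hy hyv
    rw [abs_of_nonneg (by linarith [ha h₁])] at this
    linarith [ha h₁]
  · have hxv : x ≠ v := fun hxv => h₁ ((hab (hxv.trans (hb h₂).symm)).2 h₂)
    have := hx hxv
    rw [abs_of_nonpos (by linarith [hb h₂])] at this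
    linarith [hb h₂]
  · linarith

section Patterns

variable {n : ℕ}

lemma entryR_of_lt (A : GTIdx n → ℝ) {i k : ℕ} (hi : i < n) (hk : k < n) :
    entryR A i k = A (⟨i, hi⟩, ⟨k, hk⟩) := dif_pos ⟨hi, hk⟩

lemma entryR_val (A : GTIdx n → ℝ) (p : GTIdx n) : entryR A p.1 p.2 = A p :=
  entryR_of_lt A p.1.2 p.2.2

lemma eq_of_forall_entryR_eq {A B : GTIdx n → ℝ} (hA : ∀ p, ¬ GTValid n p → A p = 0)
    (hB : ∀ p, ¬ GTValid n p → B p = 0) (h : ∀ i k, i + k < n → entryR A i k = entryR B i k) :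
    A = B := by
  funext p
  by_cases hp : GTValid n p
  · rw [← entryR_val A, ← entryR_val B]
    exact h _ _ hp
  · rw [hA p hp, hB p hp]

noncomputable def row (A : GTIdx n → ℝ) (i : ℕ) (k : Fin (n - i)) : ℝ := entryR A i k

def HasStrictRows (A : GTIdx n → ℝ) : Prop := ∀ i, StrictAnti (row A i)

def CopiesAbove (A : GTIdx n → ℝ) : Prop :=
  ∀ i k, i + 1 + k < n →
    entryR A (i + 1) k = entryR A i k ∨ entryR A (i + 1) k = entryR A i (k + 1)

variable {A B : GTIdx n → ℝ} {lam : Fin n → ℝ} {i k : ℕ}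

lemma strictAnti_row_iff :
    StrictAnti (row A i) ↔ ∀ k, i + k + 1 < n → entryR A i (k + 1) < entryR A i k := by
  rw [← List.sortedGT_ofFn_iff, List.sortedGT_iff_isChain, List.isChain_ofFn]
  exact ⟨fun h k hk => h k (by omega), fun h k hk => h k (by omega)⟩

lemma HasStrictRows.entryR_succ_lt (h : HasStrictRows A) (hk : i + k + 1 < n) :
    entryR A i (k + 1) < entryR A i k :=
  strictAnti_row_iff.1 (h i) k hk

lemma HasStrictRows.eq_of_entryR_eq (h : HasStrictRows A) {k k' : ℕ} (hk : i + k < n)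
    (hk' : i + k' < n) (heq : entryR A i k = entryR A i k') : k = k' :=
  congrArg Fin.val ((h i).injective (a₁ := ⟨k, by omega⟩) (a₂ := ⟨k', by omega⟩) heq)

lemma rowM_eq_ofFn (A : GTIdx n → ℝ) (i : ℕ) : rowM A i = ↑(List.ofFn (row A i)) := by
  have hrow : Finset.univ.filter (fun j : Fin n => i + j < n) =
      Finset.univ.map (Fin.castLEEmb (n.sub_le i)) := by
    ext j
    simp only [Finset.mem_filter, Finset.mem_univ, true_and, Finset.mem_map,
      Fin.castLEEmb_apply]
    exact ⟨fun h => ⟨⟨j, by omega⟩, rfl⟩, by rintro ⟨k, rfl⟩; simp; omega⟩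
  simp only [rowM, Multiset.pure_def, Multiset.bind_def, Multiset.bind_singleton, hrow,
    Finset.map_val, Multiset.map_map, ← Fin.univ_val_map]
  rfl

lemma card_rowM (A : GTIdx n → ℝ) (i : ℕ) : Multiset.card (rowM A i) = n - i := by
  simp [rowM_eq_ofFn]

lemma rowM_zero (hA : A ∈ GTPoly n lam) : rowM A 0 = ↑(List.ofFn lam) := by
  simp only [rowM, Multiset.pure_def, Multiset.bind_def, Multiset.bind_singleton, zero_add,
    Fin.is_lt, Finset.filter_true, Multiset.map_map, ← Fin.univ_val_map]
  exact Multiset.map_congr rfl fun j _ => hA.1 j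

lemma eq_of_rowM_eq (hA : ∀ p, ¬ GTValid n p → A p = 0) (hB : ∀ p, ¬ GTValid n p → B p = 0)
    (hAs : HasStrictRows A) (hBs : HasStrictRows B) (h : ∀ i, rowM A i = rowM B i) : A = B := by
  refine eq_of_forall_entryR_eq hA hB fun i k hk => ?_
  have hperm : (List.ofFn (row A i)).Perm (List.ofFn (row B i)) := by
    rw [← Multiset.coe_eq_coe, ← rowM_eq_ofFn, ← rowM_eq_ofFn, h]
  have hrow := List.ofFn_injective (hperm.eq_of_sortedGE
    (List.sortedGT_ofFn_iff.2 (hAs i)).sortedGE (List.sortedGT_ofFn_iff.2 (hBs i)).sortedGE)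
  exact congrFun hrow ⟨k, by omega⟩

end Patterns

section EqualityGraph

variable {n : ℕ} {A : GTIdx n → ℝ} {lam : Fin n → ℝ}

lemma gamma_adj_of_entryR_eq {i k k' : ℕ} (hk : i + 1 + k < n) (hk' : k' = k ∨ k' = k + 1)
    (hik' : i + k' < n) (heq : entryR A (i + 1) k = entryR A i k') :
    (Gamma n A).Adj ⟨(⟨i + 1, by omega⟩, ⟨k, by omega⟩), hk⟩
      ⟨(⟨i, by omega⟩, ⟨k', by omega⟩), hik'⟩ := by
  refine ⟨Or.inl ⟨hk, hik', rfl, by simpa [eq_comm] using hk'⟩, ?_⟩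
  rwa [entryR_of_lt A (by omega) (by omega), entryR_of_lt A (by omega) (by omega)] at heq

lemma isAcyclic_gamma_of_hasStrictRows (h : HasStrictRows A) : (Gamma n A).IsAcyclic := by
  refine SimpleGraph.isAcyclic_of_level (fun p => p.1.1.val) ?_ fun u a b hua hub hab => ?_
  · rintro a b ⟨hab | hba, -⟩
    · exact Or.inl hab.2.2.1.symm
    · exact Or.inr hba.2.2.1.symm
  · have hrow : a.1.1 = b.1.1 := Fin.ext hab
    have hb : (a.1.1 : ℕ) + b.1.2 < n := hab ▸ b.2
    have hcol := h.eq_of_entryR_eq a.2 hb (by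
      rw [entryR_val, hrow, entryR_val]
      exact hua.2.symm.trans hub.2)
    exact Subtype.ext (Prod.ext hrow (Fin.ext hcol))

lemma hasStrictRows_of_isAcyclic (hlam : StrictAnti lam) (hA : A ∈ GTPoly n lam)
    (hac : (Gamma n A).IsAcyclic) : HasStrictRows A := by
  intro i
  rw [strictAnti_row_iff]
  intro k hk
  refine lt_of_le_of_ne (le_trans (hA.2.1 i k (by omega)).2 (hA.2.1 i k (by omega)).1) ?_
  intro heq
  cases i with
  | zero =>
    rw [hA.1 ⟨k + 1, by omega⟩, hA.1 ⟨k, by omega⟩] at heq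
    exact (hlam (show (⟨k, by omega⟩ : Fin n) < ⟨k + 1, by omega⟩ from Nat.lt_succ_self k)).ne heq
  | succ m =>
    -- the equality forces equal entries at (m+2,k), (m+1,k), (m,k+1), (m+1,k+1): a 4-cycle
    have h₁ := hA.2.1 m (k + 1) (by omega)
    have h₂ := hA.2.1 m k (by omega)
    have h₃ := hA.2.1 (m + 1) k (by omega)
    have hcd := hac.eq_of_adj_of_adj
      (gamma_adj_of_entryR_eq (A := A) (i := m + 1) (k := k) (k' := k) (by omega) (.inl rfl)
        (by omega) (le_antisymm h₃.1 (heq.ge.trans h₃.2)))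
      (gamma_adj_of_entryR_eq (i := m) (k := k) (k' := k + 1) (by omega) (.inr rfl)
        (by omega) (le_antisymm (heq.symm.le.trans h₁.1) h₂.2))
      (gamma_adj_of_entryR_eq (i := m + 1) (k := k) (k' := k + 1) (by omega) (.inr rfl)
        (by omega) (le_antisymm (h₃.1.trans heq.symm.le) h₃.2))
      (gamma_adj_of_entryR_eq (i := m) (k := k + 1) (k' := k + 1) (by omega) (.inl rfl)
        (by omega) (le_antisymm h₁.1 (h₂.2.trans heq.ge)))
      fun h => absurd (congrArg (fun p : GTNode n => p.1.1.val) h) (by dsimp only; omega)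
    simpa using congrArg (fun p : GTNode n => p.1.2.val) hcd

end EqualityGraph

section ExtremePoints

variable {n : ℕ} {A : GTIdx n → ℝ} {lam : Fin n → ℝ}

lemma antitone_row (hA : A ∈ GTPoly n lam) (i : ℕ) : Antitone (row A i) := by
  rw [← List.sortedGE_ofFn_iff, List.sortedGE_iff_isChain, List.isChain_ofFn]
  exact fun k hk => le_trans (hA.2.1 i k (by omega)).2 (hA.2.1 i k (by omega)).1

lemma mem_extremePoints_of_copiesAbove (hA : A ∈ GTPoly n lam) (hcopy : CopiesAbove A) :
    A ∈ Set.extremePoints ℝ (GTPoly n lam) := by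
  refine ⟨hA, fun B hB C hC ⟨a, b, ha, hb, hab, hBC⟩ => ?_⟩
  have hcomb : ∀ i k, a * entryR B i k + b * entryR C i k = entryR A i k := by
    intro i k
    simp only [entryR, ← hBC]
    split_ifs <;> simp
  suffices h : ∀ i k, i + k < n → entryR B i k = entryR A i k ∧ entryR C i k = entryR A i k from
    eq_of_forall_entryR_eq hB.2.2 hA.2.2 fun i k hk => (h i k hk).1
  intro i
  induction i with
  | zero =>
    intro k hk
    exact ⟨(hB.1 ⟨k, by omega⟩).trans (hA.1 _).symm, (hC.1 ⟨k, by omega⟩).trans (hA.1 _).symm⟩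
  | succ i ih =>
    intro k hk
    rcases hcopy i k hk with hup | hup
    · obtain ⟨hBk, hCk⟩ := ih k (by omega)
      have hcomb' := hcomb (i + 1) k
      rw [hup] at hcomb' ⊢
      exact eq_of_convex_combination_le ha hb hab (hBk ▸ (hB.2.1 i k hk).1)
        (hCk ▸ (hC.2.1 i k hk).1) hcomb'
    · obtain ⟨hBk, hCk⟩ := ih (k + 1) (by omega)
      have hcomb' := hcomb (i + 1) k
      rw [hup] at hcomb' ⊢
      have := eq_of_convex_combination_le ha hb hab
        (neg_le_neg (hBk ▸ (hB.2.1 i k hk).2)) (neg_le_neg (hCk ▸ (hC.2.1 i k hk).2))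
        (by linarith)
      exact ⟨neg_inj.1 this.1, neg_inj.1 this.2⟩

lemma not_mem_extremePoints_of_levelSet (hA : A ∈ GTPoly n lam) (S : ℕ → ℕ → Prop) (v : ℝ)
    (hS : ∀ r c, S r c → r + c < n ∧ r ≠ 0 ∧ entryR A r c = v) (hne : ∃ r c, S r c)
    (hclosed : ∀ r c c', r + 1 + c < n → (c' = c ∨ c' = c + 1) →
      entryR A (r + 1) c = entryR A r c' → (S (r + 1) c ↔ S r c')) :
    A ∉ Set.extremePoints ℝ (GTPoly n lam) := by
  obtain ⟨ε, hε, hgap⟩ := exists_pos_le_abs_sub A v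
  have gap : ∀ r c, r + c < n → entryR A r c ≠ v → ε ≤ |entryR A r c - v| := by
    intro r c hrc
    rw [entryR_of_lt A (by omega) (by omega)]
    exact hgap _
  let χ : GTIdx n → ℝ := fun p => if S p.1 p.2 then 1 else 0
  have hentry : ∀ s r c, entryR (A + s • χ) r c = entryR A r c + s * (if S r c then 1 else 0) := by
    intro s r c
    by_cases hrc : r < n ∧ c < n
    · simp [entryR, hrc, χ]
    · have : ¬ S r c := fun h => hrc ⟨by linarith [(hS r c h).1], by linarith [(hS r c h).1]⟩
      simp [entryR, hrc, this]
  -- `A ± ε χ` keep all interlacing inequalities: `S` is closed under equalities along edges,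
  -- and `ε` is at most the distance from `v` to any other entry.
  have hmem : ∀ s, |s| ≤ ε → A + s • χ ∈ GTPoly n lam := by
    intro s hs
    refine ⟨fun j => ?_, fun r c hrc => ?_, fun p hp => ?_⟩
    · rw [hentry, if_neg fun h => (hS 0 j h).2.1 rfl, mul_zero, add_zero]
      exact hA.1 j
    · simp only [hentry]
      refine ⟨add_mul_ite_le (hA.2.1 r c hrc).1 hs (fun h => (hS _ _ h).2.2)
          (fun h => (hS _ _ h).2.2) (hclosed r c c hrc (.inl rfl))
          (gap _ _ (by omega)) (gap _ _ (by omega)),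
        add_mul_ite_le (hA.2.1 r c hrc).2 hs (fun h => (hS _ _ h).2.2)
          (fun h => (hS _ _ h).2.2) (fun h => (hclosed r c (c + 1) hrc (.inr rfl) h.symm).symm)
          (gap _ _ (by omega)) (gap _ _ (by omega))⟩
    · have : ¬ S p.1 p.2 := fun h => hp (hS _ _ h).1
      simp [χ, this, hA.2.2 p hp]
  intro hext
  obtain ⟨r, c, hrc⟩ := hne
  have hsplit : A ∈ openSegment ℝ (A + ε • χ) (A + (-ε) • χ) :=
    ⟨1 / 2, 1 / 2, by norm_num, by norm_num, by norm_num, by ext p; simp; ring⟩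
  have := congrArg (fun B => entryR B r c)
    (hext.2 (hmem ε (abs_of_pos hε).le) (hmem (-ε) (by rw [abs_neg, abs_of_pos hε])) hsplit)
  simp only [hentry, if_pos hrc] at this
  linarith

lemma copiesAbove_of_mem_extremePoints (hext : A ∈ Set.extremePoints ℝ (GTPoly n lam)) :
    CopiesAbove A := by
  intro i k hk
  by_contra hne
  rw [not_or] at hne
  have hA := hext.1
  set v := entryR A (i + 1) k
  have hlo : entryR A i (k + 1) < v := lt_of_le_of_ne (hA.2.1 i k hk).2 (Ne.symm hne.2)
  have hhi : v < entryR A i k := lt_of_le_of_ne (hA.2.1 i k hk).1 hne.1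
  have hrow : ∀ c, i + c < n → entryR A i c ≠ v := by
    intro c hc heq
    rcases le_or_gt c k with h | h
    · have := antitone_row hA i (show (⟨c, by omega⟩ : Fin (n - i)) ≤ ⟨k, by omega⟩ from h)
      exact absurd heq (by simp only [row] at this; linarith)
    · have := antitone_row hA i (show (⟨k + 1, by omega⟩ : Fin (n - i)) ≤ ⟨c, by omega⟩ from h)
      exact absurd heq (by simp only [row] at this; linarith)
  -- `v` does not occur in row `i`, so the entries equal to `v` below it can be moved together.
  refine not_mem_extremePoints_of_levelSet hA
    (fun r c => i + 1 ≤ r ∧ r + c < n ∧ entryR A r c = v) v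
    (fun r c h => ⟨h.2.1, by omega, h.2.2⟩) ⟨i + 1, k, le_rfl, hk, rfl⟩ ?_ hext
  intro r c c' hrc hc' heq
  constructor
  · rintro ⟨h₁, -, h₃⟩
    refine ⟨?_, by omega, heq ▸ h₃⟩
    by_contra hr
    obtain rfl : r = i := by omega
    exact hrow c' (by omega) (heq ▸ h₃)
  · rintro ⟨h₁, -, h₃⟩
    exact ⟨by omega, hrc, heq.trans h₃⟩

end ExtremePoints

section PermutationVertices

variable {n : ℕ} {lam : Fin n → ℝ}

lemma mem_GTPoly_of_copiesAbove {A : GTIdx n → ℝ} (htop : ∀ j : Fin n, entryR A 0 j = lam j)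
    (hrows : HasStrictRows A) (hcopy : CopiesAbove A) (hout : ∀ p, ¬ GTValid n p → A p = 0) :
    A ∈ GTPoly n lam := by
  refine ⟨htop, fun i k hk => ?_, hout⟩
  have hlt := hrows.entryR_succ_lt (i := i) (k := k) (by omega)
  rcases hcopy i k hk with h | h <;> rw [h] <;> constructor <;> linarith

/- Row `i` of `permVertex lam w` lists, in decreasing order, the values `lam (w⁻¹ m)` with
`i ≤ m`: those not deleted in the passage from row `m` to row `m + 1` for any `m < i`. -/
def deletedValues (lam : Fin n → ℝ) (w : Equiv.Perm (Fin n)) : List ℝ :=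
  List.ofFn fun i => lam (w⁻¹ i)

noncomputable def permRow (lam : Fin n → ℝ) (w : Equiv.Perm (Fin n)) (i : ℕ) : List ℝ :=
  Multiset.sort (↑((deletedValues lam w).drop i)) (· ≥ ·)

noncomputable def permVertex (lam : Fin n → ℝ) (w : Equiv.Perm (Fin n)) : GTIdx n → ℝ :=
  fun p => (permRow lam w p.1).getD p.2 0

variable {w : Equiv.Perm (Fin n)} {i : ℕ}

lemma coe_permRow : (permRow lam w i : Multiset ℝ) = ↑((deletedValues lam w).drop i) :=
  Multiset.sort_eq _ _

lemma length_permRow : (permRow lam w i).length = n - i := by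
  simp [permRow, deletedValues]

lemma sortedGE_permRow : (permRow lam w i).SortedGE :=
  List.sortedGE_iff_pairwise.2 (Multiset.pairwise_sort _ _)

lemma sortedGT_permRow (hlam : Function.Injective lam) : (permRow lam w i).SortedGT := by
  refine List.sortedGT_iff_nodup_and_sortedGE.2 ⟨?_, sortedGE_permRow⟩
  rw [← Multiset.coe_nodup, coe_permRow, Multiset.coe_nodup]
  exact (List.nodup_ofFn.2 (hlam.comp w⁻¹.injective)).sublist (List.drop_sublist _ _)

lemma permRow_zero (hlam : StrictAnti lam) : permRow lam w 0 = List.ofFn lam := by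
  refine List.Perm.eq_of_sortedGE sortedGE_permRow (List.sortedGE_ofFn_iff.2 hlam.antitone) ?_
  rw [← Multiset.coe_eq_coe, coe_permRow, List.drop_zero, Multiset.coe_eq_coe]
  exact Equiv.Perm.ofFn_comp_perm w⁻¹ lam

lemma permRow_succ (hi : i < n) :
    permRow lam w (i + 1) = (permRow lam w i).erase (lam (w⁻¹ ⟨i, hi⟩)) := by
  refine List.Perm.eq_of_sortedGE sortedGE_permRow
    (List.sortedGE_iff_pairwise.2 ((List.SortedGE.pairwise sortedGE_permRow).sublist
      List.erase_sublist)) ?_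
  rw [← Multiset.coe_eq_coe, ← Multiset.coe_erase, coe_permRow, coe_permRow,
    List.drop_eq_getElem_cons (i := i) (by simpa [deletedValues])]
  simp [deletedValues]

lemma entryR_permVertex (i k : ℕ) :
    entryR (permVertex lam w) i k = (permRow lam w i).getD k 0 := by
  unfold entryR
  split_ifs with h
  · rfl
  · rw [List.getD_eq_default _ _ (by rw [length_permRow]; omega)]

lemma ofFn_row_permVertex : List.ofFn (row (permVertex lam w) i) = permRow lam w i :=
  List.ext_getElem (by simp [length_permRow]) fun k _ hk => by
    simp [row, entryR_permVertex, List.getElem?_eq_getElem hk]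

lemma rowM_permVertex : rowM (permVertex lam w) i = ↑((deletedValues lam w).drop i) := by
  rw [rowM_eq_ofFn, ofFn_row_permVertex, coe_permRow]

lemma rowM_permVertex_eq_cons (j : Fin n) :
    rowM (permVertex lam w) j = lam (w⁻¹ j) ::ₘ rowM (permVertex lam w) (j + 1) := by
  rw [rowM_permVertex, rowM_permVertex, List.drop_eq_getElem_cons (by simp [deletedValues])]
  simp [deletedValues]

lemma hasStrictRows_permVertex (hlam : StrictAnti lam) : HasStrictRows (permVertex lam w) :=
  fun i => List.sortedGT_ofFn_iff.1 (ofFn_row_permVertex (i := i) ▸ sortedGT_permRow hlam.injective)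

lemma copiesAbove_permVertex : CopiesAbove (permVertex lam w) := by
  intro i k hk
  simp only [entryR_permVertex, permRow_succ (lam := lam) (w := w) (show i < n by omega)]
  exact List.getD_erase_eq_or _ _ _ _

lemma isSimpVertex_permVertex (hlam : StrictAnti lam) (w : Equiv.Perm (Fin n)) :
    IsSimpVertex n lam (permVertex lam w) := by
  have hmem : permVertex lam w ∈ GTPoly n lam := by
    refine mem_GTPoly_of_copiesAbove (fun j => ?_) (hasStrictRows_permVertex hlam)
      copiesAbove_permVertex (fun p hp => ?_)
    · simp [entryR_permVertex, permRow_zero hlam, List.getD_eq_getElem?_getD]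
    · have : ¬ (p.1 : ℕ) + p.2 < n := hp
      rw [permVertex, List.getD_eq_default _ _ (by rw [length_permRow]; omega)]
  exact ⟨mem_extremePoints_of_copiesAbove hmem copiesAbove_permVertex,
    isAcyclic_gamma_of_hasStrictRows (hasStrictRows_permVertex hlam)⟩

lemma permVertex_injective (hlam : Function.Injective lam) :
    Function.Injective (permVertex lam) := by
  intro w w' h
  refine inv_injective (Equiv.ext fun j => hlam ?_)
  have := rowM_permVertex_eq_cons (lam := lam) (w := w) j
  rw [h, rowM_permVertex_eq_cons] at this
  exact ((Multiset.cons_inj_left _).1 this).symm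

end PermutationVertices

section SimplicialVertices

variable {n : ℕ} {A : GTIdx n → ℝ} {lam : Fin n → ℝ}

lemma exists_rowM_eq_cons (hrows : HasStrictRows A) (hcopy : CopiesAbove A) {i : ℕ}
    (hi : i < n) : ∃ x, rowM A i = x ::ₘ rowM A (i + 1) := by
  have hnodup : (rowM A (i + 1)).Nodup := by
    rw [rowM_eq_ofFn, Multiset.coe_nodup]
    exact (List.sortedGT_ofFn_iff.2 (hrows _)).nodup
  have hle : rowM A (i + 1) ≤ rowM A i := by
    rw [Multiset.le_iff_subset hnodup]
    intro y hy
    rw [rowM_eq_ofFn, Multiset.mem_coe, List.mem_ofFn] at hy ⊢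
    obtain ⟨k, rfl⟩ := hy
    rcases hcopy i k (by omega) with h | h
    · exact ⟨⟨k, by omega⟩, h.symm⟩
    · exact ⟨⟨k + 1, by omega⟩, h.symm⟩
  obtain ⟨u, hu⟩ := Multiset.le_iff_exists_add.1 hle
  obtain ⟨x, rfl⟩ := Multiset.card_eq_one.1 (show Multiset.card u = 1 by
    have := congrArg Multiset.card hu
    rw [Multiset.card_add, card_rowM, card_rowM] at this
    omega)
  exact ⟨x, by rw [hu, add_comm, Multiset.singleton_add]⟩

lemma exists_permVertex_eq (hlam : StrictAnti lam) (hA : IsSimpVertex n lam A) :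
    ∃ w, permVertex lam w = A := by
  have hmem : A ∈ GTPoly n lam := hA.1.1
  have hrows := hasStrictRows_of_isAcyclic hlam hmem hA.2
  choose x hx using fun j : Fin n =>
    exists_rowM_eq_cons hrows (copiesAbove_of_mem_extremePoints hA.1) j.2
  have hdrop := Multiset.eq_coe_drop_ofFn (rowM A) x hx fun i hi =>
    Multiset.card_eq_zero.1 (by rw [card_rowM]; omega)
  obtain ⟨σ, rfl⟩ := List.exists_perm_of_perm_ofFn hlam.injective
    (Multiset.coe_eq_coe.1 (by simpa using (hdrop 0).symm.trans (rowM_zero hmem)))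
  refine ⟨σ⁻¹, eq_of_rowM_eq (isSimpVertex_permVertex hlam σ⁻¹).1.1.2.2 hmem.2.2
    (hasStrictRows_permVertex hlam) hrows fun i => ?_⟩
  rw [rowM_permVertex, hdrop]
  simp [deletedValues, Function.comp_def]

end SimplicialVertices

/-- for regular λ, GT_λ has exactly n! simplicial vertices, and sending a
simplicial vertex v to the permutation w_v (recording which λ_j is deleted when passing
from row i to row i+1) is a bijection with S_n. -/
theorem statement8 (n : ℕ) (lam : Fin n → ℤ)
    (hreg : ∀ i j : Fin n, i < j → lam j < lam i) :
    Nat.card {A : GTIdx n → ℝ // IsSimpVertex n (fun i => (lam i : ℝ)) A}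
      = Nat.factorial n ∧
    ∃ e : {A : GTIdx n → ℝ // IsSimpVertex n (fun i => (lam i : ℝ)) A}
        ≃ Equiv.Perm (Fin n),
      ∀ A : {A : GTIdx n → ℝ // IsSimpVertex n (fun i => (lam i : ℝ)) A}, ∀ i : Fin n,
        rowM A.1 (i : ℕ) = ((lam ((e A)⁻¹ i) : ℝ)) ::ₘ rowM A.1 ((i : ℕ) + 1) := by
  have hlam : StrictAnti fun i => (lam i : ℝ) := fun i j h => Int.cast_lt.2 (hreg i j h)
  let f (w : Equiv.Perm (Fin n)) : {A // IsSimpVertex n (fun i => (lam i : ℝ)) A} :=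
    ⟨permVertex _ w, isSimpVertex_permVertex hlam w⟩
  have hf : Function.Bijective f :=
    ⟨fun w w' h => permVertex_injective hlam.injective (congrArg Subtype.val h),
      fun A => (exists_permVertex_eq hlam A.2).imp fun _ hw => Subtype.ext hw⟩
  refine ⟨by rw [Nat.card_congr (Equiv.ofBijective f hf).symm, Nat.card_perm, Nat.card_fin],
    (Equiv.ofBijective f hf).symm, fun A i => ?_⟩
  obtain ⟨w, rfl⟩ := hf.2 A
  rw [Equiv.ofBijective_symm_apply_apply]
  exact rowM_permVertex_eq_cons i
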